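/- For every N ≥ 1 and every τ ∈ {⇑,0,⇓}^N there exists a (unique) polynomial P_τ ∈ ℤ[X] such that ⟨τ|β^N|∧⟩ = y^N · P_τ(y²) holds in ℤ[y]. Consequently the supersymmetry singlet |Φ(x)⟩ := x^{−N/2} β(x)^N |∧⟩ is a vector all of whose components are polynomials in x with integer coefficients. -/

import Mathlib

/-!
Grade ℤ[y] by parity of degree. Every entry of ρ that changes the auxiliary spin ↑/↓ is `y`,
every other entry is a constant, so in any product of the `ρ_{a,j}` the entry from auxiliary
state `e` to `e'` only involves degrees of parity `e + e'`. The block `⟨↑|⋯|↓⟩` therefore has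
entries in `y · ℤ[y²]`, and the `N`-th power of β has entries in `y^N · ℤ[y²]`.
Uniqueness holds because `y^N` is a nonzerodivisor and `p ↦ p(y²)` is injective.
-/

open Matrix BigOperators Finset Polynomial

noncomputable section

/-- The 6×6 matrix ρ over ℤ[y] on ℂ²⊗ℂ³, basis `(ε, σ)`, ε ∈ {0=↑,1=↓}, σ ∈ {0=⇑,1=0,2=⇓}. -/
def rho : Matrix (Fin 2 × Fin 3) (Fin 2 × Fin 3) (Polynomial ℤ) :=
  Matrix.of fun p p' =>
    if p = (0,0) ∧ p' = (0,0) then 1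
    else if p = (0,1) ∧ p' = (1,0) then Polynomial.X
    else if p = (0,2) ∧ p' = (0,2) then -1
    else if p = (0,2) ∧ p' = (1,1) then Polynomial.X
    else if p = (1,0) ∧ p' = (0,1) then Polynomial.X
    else if p = (1,0) ∧ p' = (1,0) then -1
    else if p = (1,1) ∧ p' = (0,2) then Polynomial.X
    else if p = (1,2) ∧ p' = (1,2) then 1
    else 0

/-- ρ acting on the auxiliary ℂ² and the j-th site of `(ℂ³)^{⊗N}`. -/
def rhoAt {N : ℕ} (j : Fin N) :
    Matrix (Fin 2 × (Fin N → Fin 3)) (Fin 2 × (Fin N → Fin 3)) (Polynomial ℤ) :=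
  Matrix.of fun p p' =>
    rho (p.1, p.2 j) (p'.1, p'.2 j) * if ∀ k, k ≠ j → p.2 k = p'.2 k then 1 else 0

/-- The operator β = ⟨↑| ρ_{a,N} ⋯ ρ_{a,1} |↓⟩ on `(ℂ³)^{⊗N}`, with entries in ℤ[y]. -/
def betaMat (N : ℕ) : Matrix (Fin N → Fin 3) (Fin N → Fin 3) (Polynomial ℤ) :=
  Matrix.of fun σ τ =>
    ((((List.finRange N).reverse).map fun j => rhoAt j).prod :
      Matrix (Fin 2 × (Fin N → Fin 3)) (Fin 2 × (Fin N → Fin 3)) (Polynomial ℤ)) (0, σ) (1, τ)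

/-- The reference state `|∧⟩ = |⇑…⇑⟩`, with coefficients in ℤ[y]. -/
def vacP (N : ℕ) : (Fin N → Fin 3) → Polynomial ℤ := fun σ => if σ = fun _ => 0 then 1 else 0

/-- The component `⟨τ|β^N|∧⟩ ∈ ℤ[y]`. -/
def comp (N : ℕ) (τ : Fin N → Fin 3) : Polynomial ℤ :=
  ((betaMat N ^ N).mulVec (vacP N)) τ

namespace Polynomial

variable (R : Type*) [CommSemiring R]

def shiftedEven (n : ℕ) : AddSubmonoid R[X] where
  carrier := {q | ∃ p, q = X ^ n * expand R 2 p}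
  zero_mem' := ⟨0, by simp⟩
  add_mem' := by
    rintro _ _ ⟨p, rfl⟩ ⟨p', rfl⟩
    exact ⟨p + p', by rw [map_add, mul_add]⟩

variable {R}

theorem X_mem_shiftedEven_one : (X : R[X]) ∈ shiftedEven R 1 :=
  ⟨1, by simp⟩

theorem mul_mem_shiftedEven {m n : ℕ} {q r : R[X]} (hq : q ∈ shiftedEven R m)
    (hr : r ∈ shiftedEven R n) : q * r ∈ shiftedEven R (m + n) := by
  obtain ⟨p, rfl⟩ := hq
  obtain ⟨p', rfl⟩ := hr
  exact ⟨p * p', by rw [map_mul, pow_add]; ring⟩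

theorem shiftedEven_add_two_mul_le (m j : ℕ) :
    shiftedEven R (m + 2 * j) ≤ shiftedEven R m := by
  rintro _ ⟨p, rfl⟩
  exact ⟨X ^ j * p, by rw [map_mul, map_pow, expand_X, pow_add, ← pow_mul]; ring⟩

theorem shiftedEven_anti {m n : ℕ} (h : m ≤ n) (hmod : m % 2 = n % 2) :
    shiftedEven R n ≤ shiftedEven R m := by
  obtain ⟨j, rfl⟩ : ∃ j, n = m + 2 * j := ⟨(n - m) / 2, by omega⟩
  exact shiftedEven_add_two_mul_le m j

theorem existsUnique_of_mem_shiftedEven {n : ℕ} {q : R[X]} (hq : q ∈ shiftedEven R n) :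
    ∃! p : R[X], q = X ^ n * p.comp (X ^ 2) := by
  obtain ⟨p, rfl⟩ := hq
  exact ⟨p, rfl, fun p' hp' => expand_injective two_pos ((isRegular_X_pow n).left hp').symm⟩

end Polynomial

namespace Matrix

open Polynomial

variable {R : Type*} [CommSemiring R] {α : Type*}

theorem mul_apply_mem_shiftedEven [Fintype α] {m n : ℕ} {A B : Matrix α α R[X]}
    (hA : ∀ i j, A i j ∈ shiftedEven R m) (hB : ∀ i j, B i j ∈ shiftedEven R n) (i j : α) :
    (A * B) i j ∈ shiftedEven R (m + n) :=
  AddSubmonoid.sum_mem _ fun k _ => mul_mem_shiftedEven (hA i k) (hB k j)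

theorem pow_apply_mem_shiftedEven [Fintype α] [DecidableEq α] {m : ℕ} {A : Matrix α α R[X]}
    (hA : ∀ i j, A i j ∈ shiftedEven R m) (n : ℕ) (i j : α) :
    (A ^ n) i j ∈ shiftedEven R (m * n) := by
  induction n generalizing i j with
  | zero =>
    rw [pow_zero, one_apply]
    split_ifs
    · exact ⟨1, by simp⟩
    · exact zero_mem _
  | succ n ih => exact pow_succ A n ▸ mul_apply_mem_shiftedEven ih hA i j

def IsParityGraded (M : Matrix (Fin 2 × α) (Fin 2 × α) R[X]) : Prop :=
  ∀ p q, M p q ∈ shiftedEven R ((p.1 + q.1 : Fin 2) : ℕ)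

theorem isParityGraded_one [DecidableEq α] :
    IsParityGraded (1 : Matrix (Fin 2 × α) (Fin 2 × α) R[X]) := by
  rintro ⟨e, a⟩ q
  rw [one_apply]
  split_ifs with h
  · subst h
    exact ⟨1, by fin_cases e <;> simp⟩
  · exact zero_mem _

theorem IsParityGraded.mul [Fintype α] {M M' : Matrix (Fin 2 × α) (Fin 2 × α) R[X]}
    (hM : IsParityGraded M) (hM' : IsParityGraded M') : IsParityGraded (M * M') := by
  intro p r
  refine AddSubmonoid.sum_mem _ fun q _ => ?_
  have hparity : ∀ a b c : Fin 2, ((a + c : Fin 2) : ℕ) ≤ (a + b : Fin 2) + (b + c : Fin 2) ∧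
      ((a + c : Fin 2) : ℕ) % 2 = (((a + b : Fin 2) : ℕ) + (b + c : Fin 2)) % 2 := by
    decide
  exact shiftedEven_anti (hparity p.1 q.1 r.1).1 (hparity p.1 q.1 r.1).2
    (mul_mem_shiftedEven (hM p q) (hM' q r))

theorem isParityGraded_list_prod [Fintype α] [DecidableEq α]
    {L : List (Matrix (Fin 2 × α) (Fin 2 × α) R[X])}
    (h : ∀ M ∈ L, IsParityGraded M) : IsParityGraded L.prod := by
  induction L with
  | nil => exact isParityGraded_one
  | cons M L ih =>
    rw [List.prod_cons]
    exact (h M List.mem_cons_self).mul (ih fun M' hM' => h M' (List.mem_cons_of_mem M hM'))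

end Matrix

theorem rho_mem_shiftedEven (e e' : Fin 2) (s s' : Fin 3) :
    rho (e, s) (e', s') ∈ shiftedEven ℤ ((e + e' : Fin 2) : ℕ) := by
  fin_cases e <;> fin_cases e' <;> fin_cases s <;> fin_cases s' <;>
    simp only [rho] <;> norm_num <;>
    first | exact zero_mem _ | exact X_mem_shiftedEven_one | (use 1; simp; done) | (use -1; simp)

theorem isParityGraded_rhoAt {N : ℕ} (j : Fin N) : (rhoAt j).IsParityGraded := by
  rintro ⟨e, s⟩ ⟨e', s'⟩
  rw [rhoAt, of_apply]
  split_ifs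
  · rw [mul_one]
    exact rho_mem_shiftedEven e e' (s j) (s' j)
  · rw [mul_zero]
    exact zero_mem _

theorem betaMat_apply_mem_shiftedEven (N : ℕ) (σ τ : Fin N → Fin 3) :
    betaMat N σ τ ∈ shiftedEven ℤ 1 :=
  isParityGraded_list_prod (fun M hM => by
    obtain ⟨j, -, rfl⟩ := List.mem_map.1 hM
    exact isParityGraded_rhoAt j) (0, σ) (1, τ)

theorem comp_eq_pow_apply (N : ℕ) (τ : Fin N → Fin 3) :
    comp N τ = (betaMat N ^ N) τ (fun _ => 0) := by
  have hvac : vacP N = Pi.single (fun _ => 0) 1 := by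
    ext σ
    simp [vacP, Pi.single_apply]
  rw [_root_.comp, hvac, mulVec_single_one, col_apply]

theorem stmt19_general (N : ℕ) (τ : Fin N → Fin 3) :
    ∃! p : Polynomial ℤ, comp N τ = Polynomial.X ^ N * p.comp (Polynomial.X ^ 2) := by
  refine existsUnique_of_mem_shiftedEven ?_
  rw [comp_eq_pow_apply]
  simpa only [one_mul] using
    pow_apply_mem_shiftedEven (betaMat_apply_mem_shiftedEven N) N τ (fun _ => 0)

/-- For every τ there is a unique polynomial `P_τ ∈ ℤ[X]` with
`⟨τ|β^N|∧⟩ = y^N · P_τ(y²)`; hence all components of the supersymmetry singlet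
`|Φ(x)⟩ = x^{−N/2} β^N |∧⟩` are polynomials in `x = y²` with integer coefficients. -/
theorem stmt19 (N : ℕ) (hN : 1 ≤ N) (τ : Fin N → Fin 3) :
    ∃! p : Polynomial ℤ, comp N τ = Polynomial.X ^ N * p.comp (Polynomial.X ^ 2) :=
  stmt19_general N τ

end
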